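/- arXiv:1506.00565 — 4 statements merged into one kernel-verified Lean document; each statement's English description precedes it below -/
import Mathlib

section
/- Let G be a set of positive integers and M(G) = {n : some g in G divides n}. If the sum of 1/g over g in G converges and 1 is not in G, then M(G) has an asymptotic density, and this density is strictly less than 1. -/
/-!
Let `G_N` be the elements of `G` below `N`. The multiples of the finite set `G_N` are periodic
with period `∏ G_N`, so they have a density `d_N`. A multiple of `G` that is not a multiple of
`G_N` is a multiple of some `g ∈ G` with `g ≥ N`, so the counting ratios of `M(G)` and `M(G_N)`
differ by at most `∑_{g ∈ G, g ≥ N} 1/g`, uniformly in `x`. Hence the ratios of `M(G)` converge,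
to `δ = lim d_N`. A sieve over `G_N` shows that at least a proportion `∏_{g ∈ G_N} (1 - 1/g)`
of every period avoids `M(G_N)`; since every `g ∈ G` is at least `2`, this product is at least
`exp (-2 ∑_{g ∈ G} 1/g)`, which bounds `1 - δ` away from `0`.
-/

open Filter Finset

def multiplesOf (A : Set ℕ) : Set ℕ := {n | ∃ g ∈ A, g ∣ n}

noncomputable def countUpTo (S : Set ℕ) (x : ℕ) : ℕ := (S ∩ Set.Icc 1 x).ncard

section Counting

variable {S T : Set ℕ} {x : ℕ}

lemma countUpTo_eq_card [DecidablePred (· ∈ S)] : countUpTo S x = #{n ∈ Icc 1 x | n ∈ S} := by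
  rw [countUpTo, ← Set.ncard_coe_finset]
  congr 1
  ext n
  simp only [Set.mem_inter_iff, Set.mem_Icc, coe_filter, mem_Icc, Set.mem_ofPred_eq]
  tauto

lemma countUpTo_eq_count [DecidablePred (· ∈ S)] :
    countUpTo S x = Nat.count (fun k => k + 1 ∈ S) x := by
  have : Icc 1 x = (range x).map (addRightEmbedding 1) := by
    rw [range_eq_Ico, map_add_right_Ico, zero_add, Ico_add_one_right_eq_Icc]
  rw [countUpTo_eq_card, Nat.count_eq_card_filter_range, this, filter_map, card_map]
  rfl

lemma countUpTo_le (S : Set ℕ) (x : ℕ) : countUpTo S x ≤ x := by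
  classical
  exact countUpTo_eq_count.trans_le (Nat.count_le _)

lemma countUpTo_mono (h : S ⊆ T) (x : ℕ) : countUpTo S x ≤ countUpTo T x :=
  Set.ncard_le_ncard (Set.inter_subset_inter_left _ h) ((Set.finite_Icc 1 x).inter_of_right _)

@[simp]
lemma countUpTo_zero (S : Set ℕ) : countUpTo S 0 = 0 := by
  simp [countUpTo]

lemma countUpTo_univ (x : ℕ) : countUpTo Set.univ x = x := by
  simp [countUpTo]

lemma countUpTo_inter_add_countUpTo_diff (S T : Set ℕ) (x : ℕ) :
    countUpTo (S ∩ T) x + countUpTo (S \ T) x = countUpTo S x := by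
  rw [countUpTo, countUpTo, countUpTo,
    ← Set.ncard_inter_add_ncard_sdiff_eq_ncard (S ∩ Set.Icc 1 x) T
      ((Set.finite_Icc 1 x).inter_of_right _), Set.inter_right_comm, Set.inter_sdiff_right_comm]

lemma countUpTo_add_countUpTo_compl (S : Set ℕ) (x : ℕ) :
    countUpTo S x + countUpTo Sᶜ x = x := by
  simpa [Set.compl_eq_univ_sdiff, countUpTo_univ] using
    countUpTo_inter_add_countUpTo_diff Set.univ S x

lemma countUpTo_setOf_dvd (g x : ℕ) : countUpTo {n | g ∣ n} x = x / g := by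
  classical
  rw [countUpTo_eq_card, ← Nat.Ioc_filter_dvd_card_eq_div]
  rfl

lemma countUpTo_inter_dvd_mul_le {a : ℕ} (hS : ∀ m, a * m ∈ S → m ∈ S) (x : ℕ) :
    countUpTo (S ∩ {n | a ∣ n}) (a * x) ≤ countUpTo S x := by
  refine (Set.ncard_le_ncard ?_ (((Set.finite_Icc 1 x).inter_of_right S).image (a * ·))).trans
    (Set.ncard_image_le ((Set.finite_Icc 1 x).inter_of_right S))
  rintro _ ⟨⟨hn, m, rfl⟩, hm1, hmx⟩
  have ha : 0 < a := Nat.pos_of_ne_zero (by rintro rfl; simp at hm1)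
  exact ⟨m, ⟨hS m hn, Nat.pos_of_mul_pos_left hm1, Nat.le_of_mul_le_mul_left hmx ha⟩, rfl⟩

end Counting

section Periodic

variable {S : Set ℕ} {P : ℕ}

lemma countUpTo_add_of_periodic (hS : Function.Periodic (· ∈ S) P) (x : ℕ) :
    countUpTo S (P + x) = countUpTo S P + countUpTo S x := by
  classical
  simp only [countUpTo_eq_count, Nat.count_add]
  congr 2
  funext k
  rw [show P + k + 1 = k + 1 + P by ring]
  exact hS (k + 1)

lemma countUpTo_mul_add_of_periodic (hS : Function.Periodic (· ∈ S) P) (q r : ℕ) :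
    countUpTo S (q * P + r) = q * countUpTo S P + countUpTo S r := by
  induction q with
  | zero => simp
  | succ q ih =>
    rw [add_mul, one_mul, add_comm _ P, add_assoc, countUpTo_add_of_periodic hS, ih]
    ring

lemma countUpTo_mul_of_periodic (hS : Function.Periodic (· ∈ S) P) (q : ℕ) :
    countUpTo S (q * P) = q * countUpTo S P := by
  simpa using countUpTo_mul_add_of_periodic hS q 0

lemma tendsto_div_of_abs_sub_mul_le {u : ℕ → ℝ} {d C : ℝ} (h : ∀ x : ℕ, |u x - x * d| ≤ C) :
    Tendsto (fun x : ℕ => u x / x) atTop (nhds d) := by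
  rw [← tendsto_sub_nhds_zero_iff]
  refine squeeze_zero_norm' ?_ (tendsto_const_div_atTop_nhds_zero_nat C)
  filter_upwards [eventually_gt_atTop 0] with x hx
  have hx' : (0 : ℝ) < x := Nat.cast_pos.2 hx
  rw [Real.norm_eq_abs, show u x / x - d = (u x - x * d) / x by field_simp, abs_div,
    abs_of_pos hx']
  gcongr
  exact h x

lemma tendsto_countUpTo_div_of_periodic (hS : Function.Periodic (· ∈ S) P) (hP : 0 < P) :
    Tendsto (fun x : ℕ => (countUpTo S x : ℝ) / x) atTop
      (nhds ((countUpTo S P : ℝ) / P)) := by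
  refine tendsto_div_of_abs_sub_mul_le (C := P) fun x => ?_
  have hP' : (0 : ℝ) < P := Nat.cast_pos.2 hP
  have hr := Nat.mod_lt x hP
  have hx : (x : ℝ) = (x / P : ℕ) * P + (x % P : ℕ) := by exact_mod_cast (Nat.div_add_mod' x P).symm
  have hcount : (countUpTo S x : ℝ) = (x / P : ℕ) * countUpTo S P + countUpTo S (x % P) := by
    exact_mod_cast (Nat.div_add_mod' x P) ▸ countUpTo_mul_add_of_periodic hS (x / P) (x % P)
  have hdiff : (countUpTo S x : ℝ) - x * (countUpTo S P / P) =
      countUpTo S (x % P) - (x % P : ℕ) * (countUpTo S P / P) := by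
    rw [hcount, hx]
    field_simp
    ring
  rw [hdiff]
  have hle : ∀ y ≤ P, (countUpTo S y : ℝ) ≤ P := fun y hy => by
    exact_mod_cast (countUpTo_le S y).trans hy
  apply abs_sub_le_of_nonneg_of_le (by positivity) (hle _ hr.le) (by positivity)
  calc ((x % P : ℕ) : ℝ) * (countUpTo S P / P) ≤ P * 1 := by
        gcongr
        exact div_le_one_of_le₀ (hle P le_rfl) hP'.le
    _ = P := mul_one _

end Periodic

lemma multiplesOf_mono {A B : Set ℕ} (h : A ⊆ B) : multiplesOf A ⊆ multiplesOf B :=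
  fun _ ⟨g, hg, hgn⟩ => ⟨g, h hg, hgn⟩

lemma periodic_mem_multiplesOf {A : Set ℕ} {P : ℕ} (h : ∀ g ∈ A, g ∣ P) :
    Function.Periodic (· ∈ multiplesOf A) P := fun n =>
  propext <| show (∃ g ∈ A, g ∣ n + P) ↔ ∃ g ∈ A, g ∣ n from
    exists_congr fun g => and_congr_right fun hg => Nat.dvd_add_left (h g hg)

lemma prod_sub_one_le_countUpTo_compl_multiplesOf (F : Finset ℕ) :
    ∏ g ∈ F, (g - 1) ≤ countUpTo (multiplesOf F)ᶜ (∏ g ∈ F, g) := by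
  classical
  induction F using Finset.induction_on with
  | empty => simp [multiplesOf, countUpTo_univ]
  | insert a B ha ih =>
    set Q := ∏ g ∈ B, g
    set A := (multiplesOf (B : Set ℕ))ᶜ
    have hA : Function.Periodic (· ∈ A) Q := fun n =>
      congrArg Not (periodic_mem_multiplesOf (fun g hg => dvd_prod_of_mem _ hg) n)
    have hAa : ∀ m, a * m ∈ A → m ∈ A := fun m hm ⟨g, hg, hgm⟩ =>
      hm ⟨g, hg, Dvd.dvd.mul_left hgm a⟩
    have hset : (multiplesOf ↑(insert a B))ᶜ = A \ {n | a ∣ n} := by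
      ext n
      simp only [A, multiplesOf, coe_insert, Set.mem_insert_iff, SetLike.mem_coe,
        exists_eq_or_imp, Set.mem_compl_iff, Set.mem_ofPred_eq, not_or, not_exists, not_and,
        Set.mem_sdiff]
      tauto
    -- `[1, aQ]` holds `a` periods of `A`, and `n ↦ n / a` injects its elements of `A`
    -- divisible by `a` into `A ∩ [1, Q]`: removing them leaves at least `(a - 1) · #(A ∩ [1, Q])`.
    have hsplit := countUpTo_inter_add_countUpTo_diff A {n | a ∣ n} (a * Q)
    have hdiv := countUpTo_inter_dvd_mul_le hAa Q
    rw [countUpTo_mul_of_periodic hA] at hsplit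
    rw [prod_insert ha, prod_insert ha, hset]
    calc (a - 1) * ∏ g ∈ B, (g - 1) ≤ (a - 1) * countUpTo A Q := Nat.mul_le_mul_left _ ih
      _ = a * countUpTo A Q - countUpTo A Q := Nat.sub_one_mul _ _
      _ ≤ countUpTo (A \ {n | a ∣ n}) (a * Q) := by omega

lemma exp_neg_two_mul_le_one_sub {t : ℝ} (ht₀ : 0 ≤ t) (ht : t ≤ 1 / 2) :
    Real.exp (-(2 * t)) ≤ 1 - t := by
  rw [Real.exp_neg]
  calc (Real.exp (2 * t))⁻¹ ≤ (2 * t + 1)⁻¹ := inv_anti₀ (by positivity) (Real.add_one_le_exp _)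
    _ ≤ 1 - t := by
      rw [inv_le_iff_one_le_mul₀ (by positivity)]
      nlinarith

lemma exp_neg_two_mul_sum_inv_le_prod_one_sub_inv (F : Finset ℕ) (hF : ∀ g ∈ F, 2 ≤ g) :
    Real.exp (-(2 * ∑ g ∈ F, (g : ℝ)⁻¹)) ≤ ∏ g ∈ F, (1 - (g : ℝ)⁻¹) := by
  rw [mul_sum, ← sum_neg_distrib, Real.exp_sum]
  refine prod_le_prod (fun _ _ => (Real.exp_pos _).le) fun g hg =>
    exp_neg_two_mul_le_one_sub (by positivity) ?_
  rw [one_div]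
  exact inv_anti₀ two_pos (by exact_mod_cast hF g hg)

noncomputable def multiplesDensity (F : Finset ℕ) : ℝ :=
  (countUpTo (multiplesOf F) (∏ g ∈ F, g) : ℝ) / (∏ g ∈ F, g : ℕ)

lemma tendsto_countUpTo_multiplesOf_div (F : Finset ℕ) (hF : ∀ g ∈ F, 0 < g) :
    Tendsto (fun x : ℕ => (countUpTo (multiplesOf F) x : ℝ) / x) atTop
      (nhds (multiplesDensity F)) :=
  tendsto_countUpTo_div_of_periodic (periodic_mem_multiplesOf fun _ hg => dvd_prod_of_mem _ hg)
    (prod_pos hF)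

lemma multiplesDensity_le_one_sub_prod (F : Finset ℕ) (hF : ∀ g ∈ F, 0 < g) :
    multiplesDensity F ≤ 1 - ∏ g ∈ F, (1 - (g : ℝ)⁻¹) := by
  set P := ∏ g ∈ F, g
  have hP : (0 : ℝ) < P := Nat.cast_pos.2 (prod_pos hF)
  have hcompl : (countUpTo (multiplesOf F) P : ℝ) + countUpTo (multiplesOf F)ᶜ P = P := by
    exact_mod_cast countUpTo_add_countUpTo_compl (multiplesOf F) P
  have hsieve : (∏ g ∈ F, ((g : ℝ) - 1)) ≤ countUpTo (multiplesOf F)ᶜ P := by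
    rw [← prod_congr rfl fun g hg => Nat.cast_pred (hF g hg)]
    exact_mod_cast prod_sub_one_le_countUpTo_compl_multiplesOf F
  have hfactor : ∏ g ∈ F, (1 - (g : ℝ)⁻¹) = (∏ g ∈ F, ((g : ℝ) - 1)) / P := by
    rw [Nat.cast_prod, ← prod_div_distrib]
    exact prod_congr rfl fun g hg => by field_simp [(Nat.cast_pos.2 (hF g hg)).ne']
  rw [multiplesDensity, hfactor, div_le_iff₀ hP, sub_mul, div_mul_cancel₀ _ hP.ne', one_mul]
  linarith

lemma multiplesDensity_le_one_sub_exp (F : Finset ℕ) (hF : ∀ g ∈ F, 2 ≤ g) :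
    multiplesDensity F ≤ 1 - Real.exp (-(2 * ∑ g ∈ F, (g : ℝ)⁻¹)) :=
  (multiplesDensity_le_one_sub_prod F fun g hg => (hF g hg).trans_lt' two_pos).trans
    (sub_le_sub_left (exp_neg_two_mul_sum_inv_le_prod_one_sub_inv F hF) 1)

lemma countUpTo_multiplesOf_le_add_sum (G A : Set ℕ) [DecidablePred (· ∈ G \ A)] (x : ℕ) :
    countUpTo (multiplesOf G) x ≤
      countUpTo (multiplesOf A) x + ∑ g ∈ Icc 1 x with g ∈ G \ A, x / g := by
  classical
  simp only [countUpTo_eq_card, ← countUpTo_setOf_dvd]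
  refine (card_le_card fun n hn => ?_).trans ((card_union_le _ _).trans
    (Nat.add_le_add_left (card_biUnion_le (t := fun g => {n ∈ Icc 1 x | n ∈ {m | g ∣ m}})) _))
  obtain ⟨hnx, g, hg, hgn⟩ := mem_filter.1 hn
  by_cases hA : n ∈ multiplesOf A
  · exact mem_union_left _ (mem_filter.2 ⟨hnx, hA⟩)
  · have hn₀ : 0 < n := (mem_Icc.1 hnx).1
    have hgA : g ∉ A := fun hgA => hA ⟨g, hgA, hgn⟩
    refine mem_union_right _ (mem_biUnion.2
      ⟨g, mem_filter.2 ⟨mem_Icc.2 ⟨?_, ?_⟩, hg, hgA⟩, mem_filter.2 ⟨hnx, hgn⟩⟩)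
    · exact Nat.pos_of_dvd_of_pos hgn hn₀
    · exact (Nat.le_of_dvd hn₀ hgn).trans (mem_Icc.1 hnx).2

lemma sum_le_tsum_indicator_sub_sum_range {G : Set ℕ} {φ : ℕ → ℝ} (hφ : ∀ n, 0 ≤ φ n)
    (hG : Summable (G.indicator φ)) {s : Finset ℕ} (hsG : ↑s ⊆ G) {N : ℕ} (hs : ∀ n ∈ s, N ≤ n) :
    ∑ n ∈ s, φ n ≤ ∑' n, G.indicator φ n - ∑ n ∈ range N, G.indicator φ n := by
  have hdisj : Disjoint s (range N) :=
    disjoint_left.2 fun n hn hn' => (mem_range.1 hn').not_ge (hs n hn)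
  rw [← sum_congr rfl fun n hn => Set.indicator_of_mem (hsG hn) φ, le_sub_iff_add_le,
    ← sum_union hdisj]
  exact hG.sum_le_tsum _ fun n _ => Set.indicator_nonneg (fun n _ => hφ n) n

lemma exists_tendsto_of_abs_sub_le {a : ℕ → ℝ} {b : ℕ → ℕ → ℝ} {d T : ℕ → ℝ}
    (hb : ∀ N, Tendsto (b N) atTop (nhds (d N))) (hT : Tendsto T atTop (nhds 0))
    (hab : ∀ N x, |a x - b N x| ≤ T N) :
    ∃ δ, Tendsto d atTop (nhds δ) ∧ Tendsto a atTop (nhds δ) := by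
  have hd : ∀ N M, dist (d N) (d M) ≤ T N + T M := fun N M =>
    le_of_tendsto ((hb N).dist (hb M)) <| Eventually.of_forall fun x =>
      (dist_triangle_left _ _ (a x)).trans (add_le_add (hab N x) (hab M x))
  have hcauchy : CauchySeq d := by
    refine Metric.cauchySeq_iff'.2 fun ε hε => ?_
    obtain ⟨N, hN⟩ := eventually_atTop.1 (hT.eventually (gt_mem_nhds (half_pos hε)))
    exact ⟨N, fun n hn => (hd n N).trans_lt (by linarith [hN n hn, hN N le_rfl])⟩
  obtain ⟨δ, hδ⟩ := cauchySeq_tendsto_of_complete hcauchy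
  have hunif : TendstoUniformly b a atTop := Metric.tendstoUniformly_iff.2 fun ε hε =>
    (hT.eventually (gt_mem_nhds hε)).mono fun N hN x => (hab N x).trans_lt hN
  exact ⟨δ, hδ, hunif.tendsto_of_eventually_tendsto (.of_forall hb) hδ⟩

lemma abs_countUpTo_multiplesOf_div_sub_le {G A : Set ℕ} (hAG : A ⊆ G)
    [DecidablePred (· ∈ G \ A)] (x : ℕ) :
    |(countUpTo (multiplesOf G) x : ℝ) / x - countUpTo (multiplesOf A) x / x| ≤
      ∑ g ∈ Icc 1 x with g ∈ G \ A, (g : ℝ)⁻¹ := by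
  have hmono : (countUpTo (multiplesOf A) x : ℝ) ≤ countUpTo (multiplesOf G) x := by
    exact_mod_cast countUpTo_mono (multiplesOf_mono hAG) x
  have hunion : (countUpTo (multiplesOf G) x : ℝ) ≤
      countUpTo (multiplesOf A) x + x * ∑ g ∈ Icc 1 x with g ∈ G \ A, (g : ℝ)⁻¹ :=
    calc (countUpTo (multiplesOf G) x : ℝ)
        ≤ countUpTo (multiplesOf A) x + ∑ g ∈ Icc 1 x with g ∈ G \ A, ((x / g : ℕ) : ℝ) := by
          exact_mod_cast countUpTo_multiplesOf_le_add_sum G A x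
      _ ≤ _ := by
          rw [mul_sum]
          gcongr with g
          exact Nat.cast_div_le.trans_eq (div_eq_mul_inv _ _)
  rcases x.eq_zero_or_pos with rfl | hx
  · simp
  have hx' : (0 : ℝ) < x := Nat.cast_pos.2 hx
  rw [← sub_div, abs_of_nonneg (div_nonneg (sub_nonneg.2 hmono) hx'.le), div_le_iff₀ hx']
  linarith

lemma exists_tendsto_multiplesDensity_and_countUpTo_div {G : Set ℕ} [DecidablePred (· ∈ G)]
    (hG : Summable (G.indicator fun g : ℕ => (g : ℝ)⁻¹)) :
    ∃ δ, Tendsto (fun N => multiplesDensity {g ∈ Ico 1 N | g ∈ G}) atTop (nhds δ) ∧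
      Tendsto (fun x : ℕ => (countUpTo (multiplesOf G) x : ℝ) / x) atTop (nhds δ) := by
  classical
  set f := G.indicator fun g : ℕ => (g : ℝ)⁻¹
  refine exists_tendsto_of_abs_sub_le (T := fun N => ∑' n, f n - ∑ n ∈ range N, f n)
    (fun N => tendsto_countUpTo_multiplesOf_div _ fun g hg => (mem_Ico.1 (mem_filter.1 hg).1).1)
    (by simpa using (tendsto_const_nhds (x := ∑' n, f n)).sub hG.hasSum.tendsto_sum_nat)
    fun N x => (abs_countUpTo_multiplesOf_div_sub_le (fun g hg => (mem_filter.1 hg).2) x).trans ?_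
  refine sum_le_tsum_indicator_sub_sum_range (fun g => by positivity) hG
    (fun g hg => (mem_filter.1 hg).2.1) fun g hg => ?_
  simp only [mem_filter, mem_Icc, Set.mem_sdiff, mem_coe, mem_Ico] at hg
  obtain ⟨⟨hg₁, -⟩, hgG, hgF⟩ := hg
  by_contra hgN
  exact hgF ⟨⟨hg₁, by omega⟩, hgG⟩

theorem setOfMultiples_hasDensity_lt_one_general (G : Set ℕ)
    (hone : 1 ∉ G) (hsum : Summable fun g : G => (1 : ℝ) / (g : ℕ)) :
    ∃ δ : ℝ, δ < 1 ∧
      Tendsto (fun x : ℕ => (({n : ℕ | ∃ g ∈ G, g ∣ n} ∩ Set.Icc 1 x).ncard : ℝ) / x)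
        atTop (nhds δ) := by
  classical
  have hG : Summable (G.indicator fun g : ℕ => (g : ℝ)⁻¹) := summable_subtype_iff_indicator.1 <|
    show Summable fun g : G => ((g : ℕ) : ℝ)⁻¹ by simpa only [one_div] using hsum
  obtain ⟨δ, hd, hM⟩ := exists_tendsto_multiplesDensity_and_countUpTo_div hG
  set S := ∑' n, G.indicator (fun g : ℕ => (g : ℝ)⁻¹) n
  refine ⟨δ, (le_of_tendsto' hd fun N => ?_).trans_lt (sub_lt_self 1 (Real.exp_pos (-(2 * S)))), hM⟩
  have hF : ∀ g ∈ ({g ∈ Ico 1 N | g ∈ G} : Finset ℕ), 2 ≤ g := fun g hg => by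
    obtain ⟨hg, hgG⟩ := mem_filter.1 hg
    exact (mem_Ico.1 hg).1.lt_of_ne fun h => hone (h ▸ hgG)
  refine (multiplesDensity_le_one_sub_exp _ hF).trans ?_
  gcongr
  simpa using sum_le_tsum_indicator_sub_sum_range (fun g => by positivity) hG
    (fun g hg => (mem_filter.1 hg).2) (N := 0) fun g _ => Nat.zero_le g

/-- If `G` is a set of positive integers with `1 ∉ G` and `∑ 1/g` convergent, then the
set of multiples `M(G) = {n : ∃ g ∈ G, g ∣ n}` has an asymptotic density, which is `< 1`. -/
theorem setOfMultiples_hasDensity_lt_one (G : Set ℕ) (hpos : ∀ g ∈ G, 0 < g)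
    (hone : 1 ∉ G) (hsum : Summable fun g : G => (1 : ℝ) / (g : ℕ)) :
    ∃ δ : ℝ, δ < 1 ∧
      Tendsto (fun x : ℕ => (({n : ℕ | ∃ g ∈ G, g ∣ n} ∩ Set.Icc 1 x).ncard : ℝ) / x)
        atTop (nhds δ) :=
  setOfMultiples_hasDensity_lt_one_general G hone hsum
end

section
/- If f : Z⁺ → C and g : Z⁺ → C satisfy f(n) = Σ_{d|n} g(d) for all n, and Σ_{n≥1} |g(n)|/n converges, then Σ_{n≤x} f(n) = (S + o(1))·x as x → ∞, where S = Σ_{n≥1} g(n)/n. -/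
/-!
Swapping the order of summation, `∑_{n ≤ x} f(n) = ∑_{d ≤ x} g(d) ⌊x/d⌋`, so the mean value
`x⁻¹ ∑_{n ≤ x} f(n)` is the series `∑_d g(d) ⌊x/d⌋/x`. Each term tends to `g(d)/d` and is bounded
by `|g(d)|/d`, which is summable, so dominated convergence for series (Tannery's theorem) gives
the limit `∑_d g(d)/d`.
-/

open Filter Finset Topology

theorem Nat.sum_Icc_sum_divisors_eq_sum_div_smul {M : Type*} [AddCommMonoid M] (g : ℕ → M)
    (x : ℕ) : ∑ n ∈ Icc 1 x, ∑ d ∈ n.divisors, g d = ∑ d ∈ Icc 1 x, (x / d) • g d := by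
  rw [sum_comm' (t' := Icc 1 x) (s' := fun d => {n ∈ Icc 1 x | d ∣ n})]
  · refine sum_congr rfl fun d _ => ?_
    rw [sum_const, ← Nat.Ioc_filter_dvd_card_eq_div]
    rfl
  · intro n d
    simp only [mem_Icc, Nat.mem_divisors, mem_filter]
    constructor
    · rintro ⟨⟨hn, hnx⟩, hdn, -⟩
      exact ⟨⟨⟨hn, hnx⟩, hdn⟩, Nat.pos_of_dvd_of_pos hdn hn, (Nat.le_of_dvd hn hdn).trans hnx⟩
    · rintro ⟨⟨⟨hn, hnx⟩, hdn⟩, -⟩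
      exact ⟨⟨hn, hnx⟩, hdn, by omega⟩

theorem Nat.cast_div_div_le_inv (x d : ℕ) : ((x / d : ℕ) : ℝ) / x ≤ (d : ℝ)⁻¹ := by
  rcases eq_or_ne x 0 with rfl | hx
  · simp
  calc ((x / d : ℕ) : ℝ) / x ≤ (x / d : ℝ) / x := by gcongr; exact Nat.cast_div_le
    _ = (d : ℝ)⁻¹ := by field_simp

theorem tendsto_cast_nat_div_div_atTop (d : ℕ) :
    Tendsto (fun x : ℕ => ((x / d : ℕ) : ℝ) / x) atTop (𝓝 (d : ℝ)⁻¹) := by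
  rcases eq_or_ne d 0 with rfl | hd
  · simp
  have hd_pos : (0 : ℝ) < d := by positivity
  have hfloor := (tendsto_nat_floor_div_atTop.comp
    (tendsto_natCast_atTop_atTop.atTop_div_const hd_pos)).mul_const (d : ℝ)⁻¹
  rw [one_mul] at hfloor
  refine hfloor.congr fun x => ?_
  simp only [Function.comp_apply, Nat.floor_div_eq_div]
  field_simp

/-- Wintner's mean value theorem: if `f(n) = ∑_{d ∣ n} g(d)` and `∑ |g(n)|/n < ∞`, then
`∑_{n ≤ x} f(n) = (S + o(1))·x` where `S = ∑_{n ≥ 1} g(n)/n`. -/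
theorem wintner_mean_value (f g : ℕ → ℂ)
    (hfg : ∀ n : ℕ, 0 < n → f n = ∑ d ∈ n.divisors, g d)
    (habs : Summable fun n : ℕ => ‖g n‖ / n) :
    Tendsto (fun x : ℕ => (∑ n ∈ Finset.Icc 1 x, f n) / (x : ℂ)) atTop
      (nhds (∑' n : ℕ, g n / (n : ℂ))) := by
  -- No cutoff `d ∈ Icc 1 x` is needed: `x / d = 0` both for `d = 0` and for `d > x`.
  set F : ℕ → ℕ → ℂ := fun x d => g d * ((((x / d : ℕ) : ℝ) / x : ℝ) : ℂ)
  have hF : ∀ x, ∑' d, F x d = (∑ n ∈ Icc 1 x, f n) / x := by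
    intro x
    rw [tsum_eq_sum (s := Icc 1 x), sum_congr rfl fun n hn => hfg n (mem_Icc.1 hn).1,
      Nat.sum_Icc_sum_divisors_eq_sum_div_smul, sum_div]
    · refine sum_congr rfl fun d _ => ?_
      simp only [F, nsmul_eq_mul]
      push_cast
      ring
    · intro d hd
      have hxd : x / d = 0 := Nat.div_eq_zero_iff.2 (by rw [mem_Icc] at hd; omega)
      simp [F, hxd]
  refine Tendsto.congr hF (tendsto_tsum_of_dominated_convergence habs (fun d => ?_)
    (Eventually.of_forall fun x d => ?_))
  · simpa [F, div_eq_mul_inv] using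
      ((Complex.continuous_ofReal.tendsto _).comp
        (tendsto_cast_nat_div_div_atTop d)).const_mul (g d)
  · rw [norm_mul, Complex.norm_real, Real.norm_of_nonneg (by positivity), div_eq_mul_inv]
    exact mul_le_mul_of_nonneg_left (Nat.cast_div_div_le_inv x d) (norm_nonneg _)
end

section
/- With Λ(n) defined as above, every λ in Λ(n) satisfies Ω(λ) ≥ Ω(n) − 2, where Ω counts prime factors with multiplicity. -/
/-!
Ω is completely additive, so both sides split over the primes `ℓ ∣ n`:
`Ω(n) = ∑ α_ℓ` and `Ω(λ) = ∑ Ω(λ_ℓ)`. For odd `ℓ` every local factor is `ℓ^(α-2)` times two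
factors `≥ 2`, or `ℓ^(α-1)` times `ℓ - 1 ≥ 2` (for `α = 1` it is at least `2`), hence
`Ω(λ_ℓ) ≥ α`. Only at `ℓ = 2`, where `ℓ - 1 = 1`, can prime factors be lost, and at most two.
-/

/-- The 3-element set of local factors at the prime power `ℓ^α`. -/
def LamSet (ℓ α : ℕ) : Set ℕ :=
  if 2 ≤ α then {ℓ ^ (α - 2) * (ℓ - 1) * (ℓ + 1), ℓ ^ (α - 2) * (ℓ - 1) ^ 2,
    ℓ ^ (α - 1) * (ℓ - 1)}
  else {ℓ ^ 2 - 1, (ℓ - 1) ^ 2, ℓ - 1}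

/-- `Λ(n)`: products over the primes `ℓ ∣ n` (with `ℓ^α ∥ n`) of elements of `LamSet ℓ α`. -/
def Lam (n : ℕ) : Set ℕ :=
  {m | ∃ f : ℕ → ℕ, (∀ p ∈ n.primeFactors, f p ∈ LamSet p (n.factorization p)) ∧
    m = ∏ p ∈ n.primeFactors, f p}

open ArithmeticFunction
open scoped ArithmeticFunction.Omega

theorem cardFactors_eq_sum_primeFactors (n : ℕ) :
    Ω n = ∑ p ∈ n.primeFactors, n.factorization p := by
  rw [cardFactors_eq_sum_factorization, Finsupp.sum, Nat.support_factorization]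

theorem cardFactors_finset_prod {ι : Type*} {s : Finset ι} {f : ι → ℕ}
    (hf : ∀ i ∈ s, f i ≠ 0) : Ω (∏ i ∈ s, f i) = ∑ i ∈ s, Ω (f i) := by
  classical
  induction s using Finset.induction_on with
  | empty => simp
  | insert a s ha ih =>
    rw [Finset.prod_insert ha, Finset.sum_insert ha, cardFactors_mul (hf a (by simp))
      (Finset.prod_ne_zero_iff.2 fun i hi => hf i (by simp [hi])),
      ih fun i hi => hf i (by simp [hi])]

namespace LamSet

theorem ne_zero_of_mem {p α m : ℕ} (hp : p.Prime) (hm : m ∈ LamSet p α) : m ≠ 0 := by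
  have h2 := hp.two_le
  have : 2 ^ 2 ≤ p ^ 2 := Nat.pow_le_pow_left h2 2
  unfold LamSet at hm
  split_ifs at hm <;> obtain rfl | rfl | rfl := hm
  all_goals simp [hp.ne_zero]
  all_goals omega

theorem le_cardFactors_of_mem {p α m : ℕ} (hp : p.Prime) (hp2 : p ≠ 2)
    (hm : m ∈ LamSet p α) : α ≤ Ω m := by
  have h3 : 3 ≤ p := hp.two_le.lt_of_ne' hp2
  have hpred : 0 < Ω (p - 1) := cardFactors_pos_iff_one_lt.2 (by omega)
  have hpred0 : p - 1 ≠ 0 := by omega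
  have hpow (k : ℕ) : p ^ k ≠ 0 := pow_ne_zero k hp.ne_zero
  unfold LamSet at hm
  split_ifs at hm with hα
  · obtain rfl | rfl | rfl := hm
    · have hsucc : 0 < Ω (p + 1) := cardFactors_pos_iff_one_lt.2 (by omega)
      rw [cardFactors_mul (mul_ne_zero (hpow _) hpred0) (by omega),
        cardFactors_mul (hpow _) hpred0, cardFactors_apply_prime_pow hp]
      omega
    · rw [cardFactors_mul (hpow _) (pow_ne_zero _ hpred0), cardFactors_apply_prime_pow hp,
        cardFactors_pow]
      omega
    · rw [cardFactors_mul (hpow _) hpred0, cardFactors_apply_prime_pow hp]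
      omega
  · have : 2 ^ 2 ≤ (p - 1) ^ 2 := Nat.pow_le_pow_left (by omega) 2
    have : 3 ^ 2 ≤ p ^ 2 := Nat.pow_le_pow_left h3 2
    have hm1 : 1 < m := by obtain rfl | rfl | rfl := hm <;> omega
    have := cardFactors_pos_iff_one_lt.2 hm1
    omega

theorem le_cardFactors_add_two_of_mem {α m : ℕ} (hm : m ∈ LamSet 2 α) : α ≤ Ω m + 2 := by
  unfold LamSet at hm
  split_ifs at hm with hα
  · obtain rfl | rfl | rfl := hm <;>
      simp [cardFactors_mul, Nat.prime_two, Nat.prime_three] <;> omega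
  · omega

theorem le_cardFactors_add_of_mem {p α m : ℕ} (hp : p.Prime) (hm : m ∈ LamSet p α) :
    α ≤ Ω m + if p = 2 then 2 else 0 := by
  split_ifs with hp2
  · subst hp2
    exact le_cardFactors_add_two_of_mem hm
  · exact le_cardFactors_of_mem hp hp2 hm

end LamSet

theorem Lam_Omega_lower_bound_general (n : ℕ) (lam : ℕ) (hlam : lam ∈ Lam n) :
    (n.primeFactorsList.length : ℤ) - 2 ≤ (lam.primeFactorsList.length : ℤ) := by
  obtain ⟨f, hf, rfl⟩ := hlam
  have hprime {p} (hp : p ∈ n.primeFactors) : p.Prime := Nat.prime_of_mem_primeFactors hp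
  have key : Ω n ≤ Ω (∏ p ∈ n.primeFactors, f p) + 2 :=
    calc Ω n = ∑ p ∈ n.primeFactors, n.factorization p := cardFactors_eq_sum_primeFactors n
      _ ≤ ∑ p ∈ n.primeFactors, (Ω (f p) + if p = 2 then 2 else 0) :=
        Finset.sum_le_sum fun p hp => LamSet.le_cardFactors_add_of_mem (hprime hp) (hf p hp)
      _ = ∑ p ∈ n.primeFactors, Ω (f p) + if 2 ∈ n.primeFactors then 2 else 0 := by
        rw [Finset.sum_add_distrib, Finset.sum_ite_eq']
      _ ≤ Ω (∏ p ∈ n.primeFactors, f p) + 2 := by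
        rw [cardFactors_finset_prod fun p hp => LamSet.ne_zero_of_mem (hprime hp) (hf p hp)]
        split_ifs <;> omega
  simp only [cardFactors_apply] at key
  omega

/-- Every `λ ∈ Λ(n)` satisfies `Ω(λ) ≥ Ω(n) − 2`. -/
theorem Lam_Omega_lower_bound (n : ℕ) (hn : 0 < n) (lam : ℕ) (hlam : lam ∈ Lam n) :
    (n.primeFactorsList.length : ℤ) - 2 ≤ (lam.primeFactorsList.length : ℤ) :=
  Lam_Omega_lower_bound_general n lam hlam
end

section
/- There exists a positive constant C₃ such that for all positive integers K and real x ≥ 3, the number of positive integers d ≤ x with Ω(d) ≥ K is at most C₃ · (K/2^K) · x · log x. -/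
/-!
Write `d = 2 ^ t * m` with `m` odd. At most `x / 2 ^ K` of the `d ≤ x` have `t ≥ K`.
For `t < K`, Rankin's trick bounds the number of odd `m ≤ x / 2 ^ t` with `Ω m ≥ K - t` by
`2 ^ (t - K) ∑ 2 ^ Ω m`. Writing `m = b ^ 2 * a` with `a` squarefree gives
`2 ^ Ω m = 4 ^ Ω b * τ a`, so by `∑_{a ≤ y} τ a ≤ y (1 + log y)` this sum is at most
`(∑_{b odd} 4 ^ Ω b / b ^ 2) (x / 2 ^ t) (1 + log x)`. The series over odd `b` is at most `18`:
stripping the least prime factor gives `S ≤ 1 + (∑_{p odd} 4 / p ^ 2) S`, and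
`∑_{p odd} 4 / p ^ 2 ≤ 17 / 18`. Hence each of the `K` values of `t` contributes
`O(x log x / 2 ^ K)`.
-/
open Finset Real
open scoped ArithmeticFunction.Omega ArithmeticFunction.sigma

theorem Finset.sum_le_sum_comp_of_subset_image {ι κ M : Type*} [DecidableEq κ]
    [AddCommMonoid M] [PartialOrder M] [IsOrderedAddMonoid M]
    {s : Finset ι} {t : Finset κ} {g : ι → κ} {f : κ → M}
    (hts : t ⊆ s.image g) (hf : ∀ i ∈ s, 0 ≤ f (g i)) :
    ∑ k ∈ t, f k ≤ ∑ i ∈ s, f (g i) := by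
  have hf' : ∀ k ∈ s.image g, 0 ≤ f k := by
    simp only [mem_image, forall_exists_index, and_imp]
    rintro _ i hi rfl
    exact hf i hi
  exact (sum_le_sum_of_subset_of_nonneg hts fun k hk _ => hf' k hk).trans
    (sum_image_le_of_nonneg hf')

theorem Real.log_natCast_le_log_natCast {m n : ℕ} (h : m ≤ n) : log m ≤ log n := by
  rcases m.eq_zero_or_pos with rfl | hm
  · simpa using log_natCast_nonneg n
  · exact log_le_log (by exact_mod_cast hm) (by exact_mod_cast h)

theorem natCast_div_mul_one_add_log_le (N k : ℕ) :
    ((N / k : ℕ) : ℝ) * (1 + log (N / k : ℕ)) ≤ N * (1 + log N) / k := by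
  rcases k.eq_zero_or_pos with rfl | hk
  · simp
  rw [le_div_iff₀ (by exact_mod_cast hk), mul_right_comm]
  have := log_natCast_nonneg (N / k)
  have := log_natCast_le_log_natCast (Nat.div_le_self N k)
  gcongr
  exact_mod_cast Nat.div_mul_le_self N k

theorem ArithmeticFunction.sigma_zero_apply_of_squarefree {n : ℕ} (hn : Squarefree n) :
    σ 0 n = 2 ^ Ω n := by
  have hn0 := hn.ne_zero
  rw [sigma_zero_apply, Nat.card_divisors hn0,
    prod_congr rfl fun p hp => by
      rw [Nat.factorization_eq_one_of_squarefree hn (Nat.prime_of_mem_primeFactors hp)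
        (Nat.dvd_of_mem_primeFactors hp)],
    prod_const, ← (cardDistinctFactors_eq_cardFactors_iff_squarefree hn0).2 hn,
    cardDistinctFactors_apply, Nat.primeFactors, List.card_toFinset]

theorem ArithmeticFunction.sum_Ioc_sigma_zero_le (N : ℕ) :
    ∑ n ∈ Ioc 0 N, (σ 0 n : ℝ) ≤ N * (1 + log N) := by
  have hsum : ∑ n ∈ Ioc 0 N, (σ 0 n : ℝ) = ∑ n ∈ Ioc 0 N, ((N / n : ℕ) : ℝ) := by
    exact_mod_cast sum_Ioc_sigma0_eq_sum_div N
  calc ∑ n ∈ Ioc 0 N, (σ 0 n : ℝ) ≤ ∑ n ∈ Ioc 0 N, (N : ℝ) / n := by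
        rw [hsum]; exact sum_le_sum fun n _ => Nat.cast_div_le
    _ = N * (harmonic N : ℝ) := by
        rw [harmonic_eq_sum_Icc]; push_cast; rw [mul_sum]; rfl
    _ ≤ N * (1 + log N) := by gcongr; exact harmonic_le_one_add_log N

theorem sum_range_four_div_sq_le (n : ℕ) :
    ∑ j ∈ range (n + 1), 4 / (2 * j + 3 : ℝ) ^ 2 ≤ 17 / 18 - 1 / ((n : ℝ) + 2) := by
  induction n with
  | zero => norm_num
  | succ n ih =>
    have hterm :
        4 / (2 * (n + 1 : ℕ) + 3 : ℝ) ^ 2 ≤ 1 / ((n : ℝ) + 2) - 1 / ((n + 1 : ℕ) + 2 : ℝ) := by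
      rw [div_sub_div _ _ (by positivity) (by positivity),
        div_le_div_iff₀ (by positivity) (by positivity)]
      push_cast
      nlinarith
    rw [sum_range_succ]
    push_cast at hterm ⊢
    linarith

theorem sum_primes_four_div_sq_le (N : ℕ) :
    ∑ p ∈ Icc 3 N with p.Prime, 4 / (p : ℝ) ^ 2 ≤ 17 / 18 := by
  have hsub : {p ∈ Icc 3 N | p.Prime} ⊆ (range (N + 1)).image fun j => 2 * j + 3 := by
    intro p hp
    simp only [mem_filter, mem_Icc] at hp
    have hodd := hp.2.odd_of_ne_two (by omega)
    simp only [mem_image, mem_range]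
    exact ⟨(p - 3) / 2, by omega, by rcases hodd with ⟨k, rfl⟩; omega⟩
  calc ∑ p ∈ Icc 3 N with p.Prime, (4 : ℝ) / (p : ℝ) ^ 2
      ≤ ∑ j ∈ range (N + 1), 4 / ((2 * j + 3 : ℕ) : ℝ) ^ 2 :=
        sum_le_sum_comp_of_subset_image hsub fun _ _ => by positivity
    _ ≤ 17 / 18 - 1 / ((N : ℝ) + 2) := by push_cast; exact sum_range_four_div_sq_le N
    _ ≤ 17 / 18 := by linarith [show (0 : ℝ) ≤ 1 / ((N : ℝ) + 2) by positivity]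

theorem four_pow_cardFactors_prime_mul_div_sq {p c : ℕ} (hp : p.Prime) (hc : c ≠ 0) :
    (4 : ℝ) ^ Ω (p * c) / ((p * c : ℕ) : ℝ) ^ 2 =
      4 / (p : ℝ) ^ 2 * (4 ^ Ω c / (c : ℝ) ^ 2) := by
  rw [ArithmeticFunction.cardFactors_mul hp.ne_zero hc,
    ArithmeticFunction.cardFactors_apply_prime hp, pow_add, pow_one]
  push_cast
  field_simp

theorem sum_odd_four_pow_cardFactors_div_sq_le (N : ℕ) :
    ∑ b ∈ Ioc 0 N with Odd b, (4 : ℝ) ^ Ω b / (b : ℝ) ^ 2 ≤ 18 := by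
  set B := {b ∈ Ioc 0 N | Odd b}
  set g : ℕ → ℝ := fun b => 4 ^ Ω b / (b : ℝ) ^ 2
  set S := ∑ b ∈ B, g b
  have hS : 0 ≤ S := sum_nonneg fun b _ => by positivity
  have hsub : B.erase 1 ⊆ ({p ∈ Icc 3 N | p.Prime} ×ˢ B).image fun q => q.1 * q.2 := by
    intro b hb
    simp only [B, mem_erase, mem_filter, mem_Ioc] at hb
    obtain ⟨hb1, ⟨hb0, hbN⟩, hodd⟩ := hb
    have hp := Nat.minFac_prime hb1
    have hpb := Nat.minFac_dvd b
    have hp2 : b.minFac ≠ 2 := fun h => by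
      rw [h, ← even_iff_two_dvd] at hpb; exact Nat.not_even_iff_odd.2 hodd hpb
    simp only [mem_image, mem_product, mem_filter, mem_Icc, mem_Ioc, B, Prod.exists]
    refine ⟨b.minFac, b / b.minFac, ⟨⟨⟨?_, (Nat.minFac_le hb0).trans hbN⟩, hp⟩,
      ⟨Nat.div_pos (Nat.minFac_le hb0) hp.pos, (Nat.div_le_self _ _).trans hbN⟩,
      hodd.of_dvd_nat (Nat.div_dvd_of_dvd hpb)⟩, Nat.mul_div_cancel' hpb⟩
    have := hp.two_le; omega
  have hrec : S ≤ 1 + (∑ p ∈ Icc 3 N with p.Prime, 4 / (p : ℝ) ^ 2) * S := by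
    calc S ≤ ∑ b ∈ insert 1 (B.erase 1), g b :=
          sum_le_sum_of_subset_of_nonneg (insert_erase_subset 1 B) fun b _ _ => by positivity
      _ ≤ g 1 + ∑ b ∈ B.erase 1, g b := by rw [sum_insert (notMem_erase 1 B)]
      _ ≤ 1 + ∑ q ∈ {p ∈ Icc 3 N | p.Prime} ×ˢ B, g (q.1 * q.2) := by
          gcongr
          · simp [g]
          · exact sum_le_sum_comp_of_subset_image hsub fun _ _ => by positivity
      _ = 1 + (∑ p ∈ Icc 3 N with p.Prime, 4 / (p : ℝ) ^ 2) * S := by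
          rw [sum_mul_sum, sum_product]
          refine congrArg _ (sum_congr rfl fun p hp => sum_congr rfl fun c hc => ?_)
          simp only [B, mem_filter, mem_Ioc] at hp hc
          exact four_pow_cardFactors_prime_mul_div_sq hp.2 (by omega)
  have := mul_le_mul_of_nonneg_right (sum_primes_four_div_sq_le N) hS
  linarith

theorem two_pow_cardFactors_sq_mul {b a : ℕ} (hb : b ≠ 0) (ha : Squarefree a) :
    (2 : ℝ) ^ Ω (b ^ 2 * a) = 4 ^ Ω b * σ 0 a := by
  rw [ArithmeticFunction.cardFactors_mul (pow_ne_zero 2 hb) ha.ne_zero,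
    ArithmeticFunction.cardFactors_pow, ArithmeticFunction.sigma_zero_apply_of_squarefree ha,
    pow_add, pow_mul]
  norm_num

theorem sum_odd_two_pow_cardFactors_le (N : ℕ) :
    ∑ m ∈ Ioc 0 N with Odd m, (2 : ℝ) ^ Ω m ≤ 18 * N * (1 + log N) := by
  set B := {b ∈ Ioc 0 N | Odd b}
  have hsub : {m ∈ Ioc 0 N | Odd m} ⊆
      (B.sigma fun b => {a ∈ Ioc 0 (N / (b * b)) | Squarefree a}).image
        fun q => q.1 ^ 2 * q.2 := by
    intro m hm
    simp only [mem_filter, mem_Ioc] at hm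
    obtain ⟨⟨hm0, hmN⟩, hodd⟩ := hm
    obtain ⟨a, b, rfl, ha⟩ := Nat.sq_mul_squarefree m
    have hbm : b ∣ b ^ 2 * a := (dvd_pow_self b two_ne_zero).mul_right a
    have hb0 := Nat.pos_of_dvd_of_pos hbm hm0
    simp only [mem_image, mem_sigma, mem_filter, mem_Ioc, B, Sigma.exists]
    refine ⟨b, a, ⟨⟨⟨hb0, (Nat.le_of_dvd hm0 hbm).trans hmN⟩,
      hodd.of_dvd_nat hbm⟩, ⟨Nat.pos_of_ne_zero ha.ne_zero, ?_⟩, ha⟩, rfl⟩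
    rw [Nat.le_div_iff_mul_le (Nat.mul_pos hb0 hb0)]
    linarith [sq b]
  calc ∑ m ∈ Ioc 0 N with Odd m, (2 : ℝ) ^ Ω m
      ≤ ∑ q ∈ B.sigma fun b => {a ∈ Ioc 0 (N / (b * b)) | Squarefree a},
          (2 : ℝ) ^ Ω (q.1 ^ 2 * q.2) :=
        sum_le_sum_comp_of_subset_image hsub fun _ _ => by positivity
    _ = ∑ b ∈ B, 4 ^ Ω b *
          ∑ a ∈ Ioc 0 (N / (b * b)) with Squarefree a, (σ 0 a : ℝ) := by
        rw [sum_sigma]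
        refine sum_congr rfl fun b hb => ?_
        rw [mul_sum]
        refine sum_congr rfl fun a ha => ?_
        simp only [B, mem_filter, mem_Ioc] at hb ha
        exact two_pow_cardFactors_sq_mul hb.1.1.ne' ha.2
    _ ≤ ∑ b ∈ B, 4 ^ Ω b * ((N / (b * b) : ℕ) * (1 + log (N / (b * b) : ℕ))) := by
        gcongr with b
        exact (sum_le_sum_of_subset_of_nonneg (filter_subset _ _) fun _ _ _ => by positivity).trans
          (ArithmeticFunction.sum_Ioc_sigma_zero_le _)
    _ ≤ ∑ b ∈ B, 4 ^ Ω b * (N * (1 + log N) / (b * b : ℕ)) := by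
        gcongr with b
        exact natCast_div_mul_one_add_log_le N (b * b)
    _ = (∑ b ∈ B, 4 ^ Ω b / (b : ℝ) ^ 2) * (N * (1 + log N)) := by
        rw [sum_mul]
        exact sum_congr rfl fun b _ => by push_cast; ring
    _ ≤ 18 * N * (1 + log N) := by
        rw [mul_assoc]; gcongr; exact sum_odd_four_pow_cardFactors_div_sq_le N

theorem card_filter_le_sum_pow_div {ι : Type*} (s : Finset ι) (f : ι → ℕ) (j : ℕ) {r : ℝ}
    (hr : 1 ≤ r) : (#{i ∈ s | j ≤ f i} : ℝ) ≤ (∑ i ∈ s, r ^ f i) / r ^ j := by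
  rw [le_div_iff₀ (by positivity), card_eq_sum_ones, Nat.cast_sum, sum_mul]
  calc ∑ i ∈ s with j ≤ f i, ((1 : ℕ) : ℝ) * r ^ j
      ≤ ∑ i ∈ s with j ≤ f i, r ^ f i :=
        sum_le_sum fun i hi => by
          rw [Nat.cast_one, one_mul]; exact pow_le_pow_right₀ hr (mem_filter.1 hi).2
    _ ≤ ∑ i ∈ s, r ^ f i :=
        sum_le_sum_of_subset_of_nonneg (filter_subset _ _) fun _ _ _ => by positivity

theorem card_odd_cardFactors_ge_le (N j : ℕ) :
    (#{m ∈ Ioc 0 N | Odd m ∧ j ≤ Ω m} : ℝ) ≤ 18 * N * (1 + log N) / 2 ^ j := by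
  rw [← filter_filter]
  exact (card_filter_le_sum_pow_div _ _ j one_le_two).trans
    (by gcongr; exact sum_odd_two_pow_cardFactors_le N)

theorem card_cardFactors_ge_of_factorization_two_eq_le (n K t : ℕ) :
    #{d ∈ Ioc 0 n | d.factorization 2 = t ∧ K ≤ Ω d} ≤
      #{m ∈ Ioc 0 (n / 2 ^ t) | Odd m ∧ K - t ≤ Ω m} := by
  refine (card_le_card fun d hd => ?_).trans (card_image_le (f := (2 ^ t * ·)))
  simp only [mem_filter, mem_Ioc] at hd
  obtain ⟨⟨hd0, hdn⟩, rfl, hK⟩ := hd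
  have hd := Nat.ordProj_mul_ordCompl_eq_self d 2
  have hm0 := Nat.ordCompl_pos 2 hd0.ne'
  have hΩ : Ω d = d.factorization 2 + Ω (ordCompl[2] d) := by
    conv_lhs => rw [← hd]
    rw [ArithmeticFunction.cardFactors_mul (by positivity) hm0.ne',
      ArithmeticFunction.cardFactors_apply_prime_pow Nat.prime_two]
  simp only [mem_image, mem_filter, mem_Ioc]
  refine ⟨ordCompl[2] d, ⟨⟨hm0, ?_⟩, ?_, by omega⟩, hd⟩
  · rw [Nat.le_div_iff_mul_le (by positivity), mul_comm, hd]; exact hdn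
  · exact Nat.odd_iff.2 (Nat.two_dvd_ne_zero.1 (Nat.not_dvd_ordCompl Nat.prime_two hd0.ne'))

theorem card_cardFactors_ge_le (n K : ℕ) :
    (#{d ∈ Ioc 0 n | K ≤ Ω d} : ℝ) ≤ n * (1 + 18 * K * (1 + log n)) / 2 ^ K := by
  set fibre : ℕ → Finset ℕ := fun t => {d ∈ Ioc 0 n | d.factorization 2 = t ∧ K ≤ Ω d}
  have hcover : {d ∈ Ioc 0 n | K ≤ Ω d} ⊆
      {d ∈ Ioc 0 n | 2 ^ K ∣ d} ∪ (range K).biUnion fibre := by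
    intro d hd
    rw [mem_filter] at hd
    rcases lt_or_ge (d.factorization 2) K with h | h
    · exact mem_union_right _
        (mem_biUnion.2 ⟨_, mem_range.2 h, mem_filter.2 ⟨hd.1, rfl, hd.2⟩⟩)
    · exact mem_union_left _
        (mem_filter.2 ⟨hd.1, (pow_dvd_pow 2 h).trans (Nat.ordProj_dvd d 2)⟩)
  have hfibre : ∀ t ∈ range K, (#(fibre t) : ℝ) ≤ 18 * n * (1 + log n) / 2 ^ K := by
    intro t ht
    have h2K : (2 : ℝ) ^ K = 2 ^ (K - t) * 2 ^ t := by
      rw [← pow_add, Nat.sub_add_cancel (mem_range.1 ht).le]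
    calc (#(fibre t) : ℝ) ≤ #{m ∈ Ioc 0 (n / 2 ^ t) | Odd m ∧ K - t ≤ Ω m} := by
          exact_mod_cast card_cardFactors_ge_of_factorization_two_eq_le n K t
      _ ≤ 18 * ((n / 2 ^ t : ℕ) * (1 + log (n / 2 ^ t : ℕ))) / 2 ^ (K - t) := by
          rw [← mul_assoc]; exact card_odd_cardFactors_ge_le _ _
      _ ≤ 18 * (n * (1 + log n) / (2 ^ t : ℕ)) / 2 ^ (K - t) := by
          gcongr; exact natCast_div_mul_one_add_log_le n (2 ^ t)
      _ = 18 * n * (1 + log n) / 2 ^ K := by rw [h2K]; push_cast; field_simp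
  calc (#{d ∈ Ioc 0 n | K ≤ Ω d} : ℝ)
      ≤ #{d ∈ Ioc 0 n | 2 ^ K ∣ d} + ∑ t ∈ range K, (#(fibre t) : ℝ) := by
        exact_mod_cast (card_le_card hcover).trans
          ((card_union_le _ _).trans (add_le_add_right card_biUnion_le _))
    _ ≤ n / 2 ^ K + K * (18 * n * (1 + log n) / 2 ^ K) := by
        gcongr
        · rw [Nat.Ioc_filter_dvd_card_eq_div]; exact_mod_cast Nat.cast_div_le
        · simpa using sum_le_sum hfibre
    _ = n * (1 + 18 * K * (1 + log n)) / 2 ^ K := by ring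

/-- There is `C₃ > 0` such that the number of `d ≤ x` with `Ω(d) ≥ K` is at most
`C₃·(K/2^K)·x·log x`. -/
theorem count_many_prime_factors :
    ∃ C₃ : ℝ, 0 < C₃ ∧ ∀ K : ℕ, 0 < K → ∀ x : ℝ, 3 ≤ x →
      (((Finset.Icc 1 ⌊x⌋₊).filter fun d => K ≤ d.primeFactorsList.length).card : ℝ) ≤
        C₃ * ((K : ℝ) / 2 ^ K) * x * Real.log x := by
  refine ⟨37, by norm_num, fun K hK x hx => ?_⟩
  have hx0 : 0 < x := by linarith
  have hlogx : 1 ≤ log x := by rw [le_log_iff_exp_le hx0]; linarith [exp_one_lt_d9]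
  have hn : (⌊x⌋₊ : ℝ) ≤ x := Nat.floor_le hx0.le
  have hlogn : log ⌊x⌋₊ ≤ log x :=
    log_le_log (Nat.cast_pos.2 (Nat.floor_pos.2 (by linarith))) hn
  have hK : (1 : ℝ) ≤ K := by exact_mod_cast hK
  simp_rw [← ArithmeticFunction.cardFactors_apply]
  calc (#{d ∈ Ioc 0 ⌊x⌋₊ | K ≤ Ω d} : ℝ)
      ≤ ⌊x⌋₊ * (1 + 18 * K * (1 + log ⌊x⌋₊)) / 2 ^ K := card_cardFactors_ge_le _ K
    _ ≤ x * (K * log x + 18 * K * (2 * log x)) / 2 ^ K := by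
        gcongr
        · nlinarith
        · linarith
    _ = 37 * (K / 2 ^ K) * x * log x := by ring
end
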